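/- For integers m ≥ 0 and n, k ≥ 1, one has x₁^m ш (x₁^n x₀^k) = Σ_{m₁+m₂=m, m_i ≥ 0} C(m₁+n-1, n-1) · x₁^{m₁+n} 𝔅_{m₂+1}^{k}, an identity of multisets of words, where a binomial coefficient c multiplying a multiset means the multiset repeated c times. -/

import Mathlib

/-- The shuffle product of two words, as a multiset of words. -/
def shuffle {X : Type*} : List X → List X → Multiset (List X)
  | u, [] => {u}
  | [], v => {v}
  | a :: u, b :: v =>
      (shuffle u (b :: v)).map (a :: ·) + (shuffle (a :: u) v).map (b :: ·)
termination_by u v => u.length + v.length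

/-- The two-letter alphabet `X = {x₀, x₁}`. -/
def x0 : Bool := false
def x1 : Bool := true

/-- `𝔅_r^m`: the multiset of all words `x₀^{m₁} x₁ x₀^{m₂} x₁ ⋯ x₁ x₀^{m_r}`
with `m₁ + ⋯ + m_r = m`, `m_i ≥ 0`. -/
def B (r m : ℕ) : Multiset (List Bool) :=
  (Finset.Nat.antidiagonalTuple r m).val.map fun f =>
    List.intercalate [x1] (List.ofFn fun i => List.replicate (f i) x0)

/-- `S w T`: the multiset of all concatenations `u ++ w ++ v` with `u ∈ S`, `v ∈ T`,
counted with multiplicity. -/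
def msConcat {X : Type*} (S : Multiset (List X)) (w : List X) (T : Multiset (List X)) :
    Multiset (List X) :=
  S.bind fun u => T.map fun v => u ++ w ++ v

/-!
Split each interleaving of `x₁^m` with `x₁^n w` at the last letter of the block `x₁^n`.
Before it stand `n - 1` letters of that block and some `p₁` letters of `x₁^m`, all equal to
`x₁`, in `C(p₁ + n - 1, n - 1)` orders; after it comes an interleaving of the remaining
`x₁^{p₂}` with `w`. This holds for every word `w`; for `w = x₀^k`, the shuffle
`x₁^{p₂} ш x₀^k` is `𝔅_{p₂+1}^k`, as both sides satisfy the same recursion on the first letter.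
-/

open Finset

lemma shuffle_nil_left {X : Type*} (v : List X) : shuffle [] v = {v} := by
  cases v <;> simp [shuffle]

lemma shuffle_nil_right {X : Type*} (u : List X) : shuffle u [] = {u} := by
  cases u <;> simp [shuffle]

lemma shuffle_cons_cons {X : Type*} (a b : X) (u v : List X) :
    shuffle (a :: u) (b :: v) =
      (shuffle u (b :: v)).map (a :: ·) + (shuffle (a :: u) v).map (b :: ·) := by
  rw [shuffle]

lemma Multiset.map_finset_sum {ι α β : Type*} (f : α → β) (s : Finset ι) (g : ι → Multiset α) :
    (∑ i ∈ s, g i).map f = ∑ i ∈ s, (g i).map f :=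
  map_sum (Multiset.mapAddMonoidHom f) g s

lemma map_cons_map_replicate_append {X : Type*} (a : X) (j : ℕ) (S : Multiset (List X)) :
    ((S.map (List.replicate j a ++ ·)).map (a :: ·)) = S.map (List.replicate (j + 1) a ++ ·) := by
  rw [Multiset.map_map]
  rfl

lemma shuffle_replicate_replicate_append {X : Type*} (a : X) (w : List X) :
    ∀ m ν : ℕ, shuffle (List.replicate m a) (List.replicate (ν + 1) a ++ w) =
      ∑ p ∈ antidiagonal m, Nat.choose (p.1 + ν) ν •
        (shuffle (List.replicate p.2 a) w).map (List.replicate (p.1 + ν + 1) a ++ ·)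
  | 0, ν => by simp [shuffle_nil_left]
  | m + 1, 0 => by
    rw [List.replicate_succ, List.replicate_succ, List.cons_append, shuffle_cons_cons,
      ← List.replicate_succ, ← List.cons_append, ← List.replicate_succ,
      shuffle_replicate_replicate_append a w m 0, Nat.sum_antidiagonal_succ]
    simp only [Multiset.map_finset_sum, map_cons_map_replicate_append,
      Nat.choose_zero_right, one_smul, List.replicate_zero, List.nil_append, add_zero, zero_add]
    rw [add_comm]
    congr 1
  | m + 1, ν + 1 => by
    rw [List.replicate_succ, List.replicate_succ, List.cons_append, shuffle_cons_cons,
      ← List.replicate_succ, ← List.cons_append, ← List.replicate_succ,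
      shuffle_replicate_replicate_append a w m (ν + 1),
      shuffle_replicate_replicate_append a w (m + 1) ν,
      Nat.sum_antidiagonal_succ, Nat.sum_antidiagonal_succ]
    simp only [Multiset.map_finset_sum, Multiset.map_nsmul, map_cons_map_replicate_append,
      Multiset.map_add, Nat.choose_self, one_smul, zero_add]
    rw [add_left_comm, ← sum_add_distrib]
    congr 1
    refine sum_congr rfl fun p _ => ?_
    have pascal : (p.1 + (ν + 1)).choose (ν + 1) + (p.1 + 1 + ν).choose ν =
        (p.1 + 1 + (ν + 1)).choose (ν + 1) := by
      rw [show p.1 + 1 + (ν + 1) = p.1 + (ν + 1) + 1 by omega, Nat.choose_succ_succ',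
        show p.1 + (ν + 1) = p.1 + 1 + ν by omega, add_comm]
    rw [show p.1 + (ν + 1) + 1 + 1 = p.1 + 1 + (ν + 1) + 1 by omega,
      show p.1 + 1 + ν + 1 + 1 = p.1 + 1 + (ν + 1) + 1 by omega, ← add_nsmul, pascal]
termination_by m ν => m + ν

lemma intercalate_singleton_replicate_nil {α : Type*} (a : α) :
    ∀ r : ℕ, List.intercalate [a] (List.replicate (r + 1) []) = List.replicate r a
  | 0 => rfl
  | r + 1 => by
    rw [List.replicate_succ, List.replicate_succ, List.intercalate_cons_cons, ← List.replicate_succ,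
      intercalate_singleton_replicate_nil a r]
    rfl

lemma B_one (k : ℕ) : B 1 k = {List.replicate k x0} := by
  simp [B]

lemma B_succ_zero (r : ℕ) : B (r + 1) 0 = {List.replicate r x1} := by
  rw [B, Finset.Nat.antidiagonalTuple_zero_right]
  simp only [Finset.singleton_val, Multiset.map_singleton, Pi.zero_apply, List.replicate_zero,
    List.ofFn_const, intercalate_singleton_replicate_nil]

lemma B_add_two (r k : ℕ) :
    B (r + 2) k = ∑ p ∈ antidiagonal k,
      (B (r + 1) p.2).map (List.replicate p.1 x0 ++ x1 :: ·) := by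
  have tuples : (Finset.Nat.antidiagonalTuple (r + 2) k).val =
      (antidiagonal k).val.bind fun p =>
        (Finset.Nat.antidiagonalTuple (r + 1) p.2).val.map (Fin.cons p.1) :=
    (Multiset.coe_bind (List.Nat.antidiagonal k) fun p =>
      (List.Nat.antidiagonalTuple (r + 1) p.2).map (Fin.cons (α := fun _ => ℕ) p.1)).symm
  rw [B, tuples, Multiset.map_bind]
  refine Multiset.bind_congr fun p _ => ?_
  rw [B, Multiset.map_map, Multiset.map_map]
  refine Multiset.map_congr rfl fun f _ => ?_
  simp only [Function.comp_apply, List.ofFn_succ, Fin.cons_zero, Fin.cons_succ]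
  rw [List.intercalate_cons_of_ne_nil (List.cons_ne_nil _ _)]
  simp

lemma B_add_two_succ (r k : ℕ) :
    B (r + 2) (k + 1) = (B (r + 1) (k + 1)).map (x1 :: ·) + (B (r + 2) k).map (x0 :: ·) := by
  rw [B_add_two, B_add_two, Nat.sum_antidiagonal_succ, Multiset.map_finset_sum]
  simp [Multiset.map_map, List.replicate_succ]

lemma shuffle_replicate_x1_replicate_x0 :
    ∀ m k : ℕ, shuffle (List.replicate m x1) (List.replicate k x0) = B (m + 1) k
  | 0, k => by rw [List.replicate_zero, shuffle_nil_left, B_one]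
  | m + 1, 0 => by rw [List.replicate_zero, shuffle_nil_right, B_succ_zero]
  | m + 1, k + 1 => by
    rw [List.replicate_succ, List.replicate_succ, shuffle_cons_cons, ← List.replicate_succ,
      ← List.replicate_succ, shuffle_replicate_x1_replicate_x0 m (k + 1),
      shuffle_replicate_x1_replicate_x0 (m + 1) k, B_add_two_succ]
termination_by m k => m + k

theorem shuffle_x1_pow_x1_pow_x0_pow_general (m n k : ℕ) (hn : 1 ≤ n) :
    shuffle (List.replicate m x1) (List.replicate n x1 ++ List.replicate k x0) =
      ∑ p ∈ Finset.HasAntidiagonal.antidiagonal m,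
        Nat.choose (p.1 + n - 1) (n - 1) •
          (B (p.2 + 1) k).map (fun w => List.replicate (p.1 + n) x1 ++ w) := by
  obtain ⟨ν, rfl⟩ : ∃ ν, n = ν + 1 := ⟨n - 1, by omega⟩
  rw [shuffle_replicate_replicate_append]
  refine sum_congr rfl fun p _ => ?_
  rw [shuffle_replicate_x1_replicate_x0, Nat.add_sub_cancel, ← add_assoc, Nat.add_sub_cancel]

theorem shuffle_x1_pow_x1_pow_x0_pow (m n k : ℕ) (hn : 1 ≤ n) (hk : 1 ≤ k) :
    shuffle (List.replicate m x1) (List.replicate n x1 ++ List.replicate k x0) =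
      ∑ p ∈ Finset.HasAntidiagonal.antidiagonal m,
        Nat.choose (p.1 + n - 1) (n - 1) •
          (B (p.2 + 1) k).map (fun w => List.replicate (p.1 + n) x1 ++ w) :=
  shuffle_x1_pow_x1_pow_x0_pow_general m n k hn
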